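/- Let ν, ν′ ∈ I_τ be two translation-invariant stationary measures of a PCA. If ν satisfies GCB(C) and ν′ ≠ ν, then s_*(ν′|ν) > 0; in particular, ν and ν′ cannot both be Gibbs measures for the same translation-invariant absolutely summable potential. -/

import Mathlib

open MeasureTheory Filter
open scoped ENNReal

/-- Spatial configurations: spins (encoded as `Bool`, `true` = +1) indexed by `ι`. -/
abbrev Config (ι : Type*) := ι → Bool

/-- The lattice `ℤ^d`. -/
abbrev Site (d : ℕ) := Fin d → ℤ

/-- Spin value `±1` of a Boolean. -/
noncomputable def spin (b : Bool) : ℝ := if b then 1 else -1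

/-- Flip the spin of `σ` at site `x`. -/
def flipAt {ι : Type*} [DecidableEq ι] (σ : Config ι) (x : ι) : Config ι :=
  Function.update σ x (!σ x)

/-- Oscillation `δ_x f = sup_σ (f(σ^{(x)}) - f(σ))`. -/
noncomputable def osc {ι : Type*} [DecidableEq ι] (f : Config ι → ℝ) (x : ι) : ℝ :=
  ⨆ σ : Config ι, (f (flipAt σ x) - f σ)

/-- `‖δ f‖₂²  = ∑_x (δ_x f)²`. -/
noncomputable def oscNormSq {ι : Type*} [DecidableEq ι] (f : Config ι → ℝ) : ℝ :=
  ∑' x : ι, osc f x ^ 2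

/-- `‖δ f‖₁ = ∑_x δ_x f`. -/
noncomputable def oscNorm1 {ι : Type*} [DecidableEq ι] (f : Config ι → ℝ) : ℝ :=
  ∑' x : ι, osc f x

/-- `f` depends only on the coordinates in `Λ` (i.e. `f` is `F_Λ`-measurable). -/
def LocalOn {ι : Type*} (Λ : Finset ι) (f : Config ι → ℝ) : Prop :=
  ∀ σ τ : Config ι, (∀ x ∈ Λ, σ x = τ x) → f σ = f τ

/-- `f` is a local function. -/
def IsLocal {ι : Type*} (f : Config ι → ℝ) : Prop := ∃ Λ : Finset ι, LocalOn Λ f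

/-- Gaussian concentration bound with constant `C`:
`log ∫ e^{f - ∫ f dμ} dμ ≤ (C/2) ‖δ f‖₂²` for every local function `f`. -/
def GCB {ι : Type*} [DecidableEq ι] (μ : Measure (Config ι)) (C : ℝ) : Prop :=
  ∀ f : Config ι → ℝ, IsLocal f →
    Real.log (∫ σ, Real.exp (f σ - ∫ τ, f τ ∂μ) ∂μ) ≤ C / 2 * oscNormSq f

/-- The cylinder set of configurations agreeing with `b` on `Λ`. -/
def cyl {ι : Type*} (Λ : Finset ι) (b : ι → Bool) : Set (Config ι) :=
  {σ | ∀ x ∈ Λ, σ x = b x}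

/-- `h_x(η) = ∑_{A ⋐ ℤ^d} r_A η_{A+x}`. -/
noncomputable def hfun {d : ℕ} (r : Finset (Site d) → ℝ) (x : Site d)
    (η : Config (Site d)) : ℝ :=
  ∑' A : Finset (Site d), r A * ∏ y ∈ A, spin (η (y + x))

/-- `p_x(η) = ½ (1 + η_x h_x(η))`, the probability that the new spin at `x` is `+1`. -/
noncomputable def pPlus {d : ℕ} (r : Finset (Site d) → ℝ) (x : Site d)
    (η : Config (Site d)) : ℝ :=
  (1 + spin (η x) * hfun r x η) / 2

/-- A (translation-invariant) probabilistic cellular automaton on `{-1,+1}^{ℤ^d}`: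
given the configuration `η`, the next configuration is distributed as the product
measure with marginals `p_x(η)` at site `x`. -/
structure PCA (d : ℕ) where
  r : Finset (Site d) → ℝ
  summable_r : Summable fun A => |r A|
  hbound : ∀ (x : Site d) (η : Config (Site d)), |hfun r x η| ≤ 1
  ker : Config (Site d) → Measure (Config (Site d))
  ker_meas : Measurable ker
  ker_prob : ∀ η, IsProbabilityMeasure (ker η)
  ker_marginal : ∀ (η : Config (Site d)) (Λ : Finset (Site d)) (b : Site d → Bool),
    ker η (cyl Λ b) =
      ∏ x ∈ Λ, ENNReal.ofReal (if b x then pPlus r x η else 1 - pPlus r x η)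

/-- The transition operator `P` acting on functions: `Pf(η) = ∫ f(σ) p(dσ|η)`. -/
noncomputable def Pop {d : ℕ} (P : PCA d) (f : Config (Site d) → ℝ)
    (η : Config (Site d)) : ℝ :=
  ∫ σ, f σ ∂(P.ker η)

/-- The transition operator acting on measures: `μP`. -/
noncomputable def Pmeas {d : ℕ} (P : PCA d) (μ : Measure (Config (Site d))) :
    Measure (Config (Site d)) :=
  μ.bind P.ker

/-- `ψ(x) = ∑_{A ∋ x} |r_A|`. -/
noncomputable def psi {d : ℕ} (P : PCA d) (x : Site d) : ℝ :=
  ∑' A : Finset (Site d), if x ∈ A then |P.r A| else 0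

/-- `‖ψ‖₁ = ∑_{A ⋐ ℤ^d} |A| |r_A|`. -/
noncomputable def psiNorm1 {d : ℕ} (P : PCA d) : ℝ :=
  ∑' A : Finset (Site d), (A.card : ℝ) * |P.r A|

/-- The contraction coefficient `κ = ‖ψ‖₁² = (∑_A |A||r_A|)²`. -/
noncomputable def kappa {d : ℕ} (P : PCA d) : ℝ := psiNorm1 P ^ 2

/-- The shift (translation) of a configuration by `a ∈ ℤ^d`. -/
def shift {d : ℕ} (a : Site d) (σ : Config (Site d)) : Config (Site d) :=
  fun x => σ (x + a)

/-- Translation invariance of a measure on `{-1,+1}^{ℤ^d}`. -/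
def TransInv {d : ℕ} (μ : Measure (Config (Site d))) : Prop :=
  ∀ a : Site d, μ.map (shift a) = μ

/-- The cube `C_n = [-n,n]^d ∩ ℤ^d` as a finite set of sites. -/
noncomputable def cube (d n : ℕ) : Finset (Site d) :=
  Fintype.piFinset fun _ : Fin d => Finset.Icc (-(n : ℤ)) (n : ℤ)

/-- The relative entropy `S_Λ(ν|μ)` of the `Λ`-marginals (in `[0,∞]`,
`∞` unless `ν_Λ ≪ μ_Λ`). -/
noncomputable def relEntVol {ι : Type*} [DecidableEq ι]
    (ν μ : Measure (Config ι)) (Λ : Finset ι) : ℝ≥0∞ := by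
  classical
  exact
    if ∀ b : ι → Bool, μ (cyl Λ b) = 0 → ν (cyl Λ b) = 0 then
      ENNReal.ofReal (∑ b : Λ → Bool,
        (ν (cyl Λ fun x => if h : x ∈ Λ then b ⟨x, h⟩ else false)).toReal *
          Real.log ((ν (cyl Λ fun x => if h : x ∈ Λ then b ⟨x, h⟩ else false)).toReal /
            (μ (cyl Λ fun x => if h : x ∈ Λ then b ⟨x, h⟩ else false)).toReal))
    else ⊤

/-- The lower relative entropy density `s_*(ν|μ) = liminf_n S_{C_n}(ν|μ)/|C_n|`. -/
noncomputable def sStar {d : ℕ} (ν μ : Measure (Config (Site d))) : ℝ≥0∞ :=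
  Filter.liminf (fun n : ℕ => relEntVol ν μ (cube d n) / ((cube d n).card : ℝ≥0∞))
    Filter.atTop


/-!
For `g` depending only on the spins in `Λ`, the Donsker–Varadhan inequality gives
`S_Λ(ν'|ν) ≥ ∫ g dν' - log ∫ e^g dν`, and `GCB(C)` bounds the logarithm by
`∫ g dν + (C/2) ‖δg‖₂²`; optimizing over multiples of `g` yields
`S_Λ(ν'|ν) ≥ (∫ g dν' - ∫ g dν)² / (2C ‖δg‖₂²)`. As `ν' ≠ ν`, the two measures differ on a
cylinder; let `g` be the sum of the translates of its indicator over the cube `C_n`. By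
translation invariance `∫ g dν' - ∫ g dν` grows like `|C_n|`, while a spin flip changes at most
`|Λ|` of the translates, so `‖δg‖₂²` grows like `|C_{n+m}|`. Hence
`S_{C_{n+m}}(ν'|ν) / |C_{n+m}|` stays above a positive constant.
-/

lemma sub_le_mul_log_div {a b : ℝ} (ha : 0 ≤ a) (hb : 0 < b) : a - b ≤ a * Real.log (a / b) := by
  rcases ha.eq_or_lt with rfl | ha
  · simpa using hb.le
  have h := mul_le_mul_of_nonneg_left (Real.one_sub_inv_le_log_of_pos (div_pos ha hb)) ha.le
  rwa [inv_div, mul_sub, mul_one, mul_div_cancel₀ _ ha.ne'] at h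

/-- The Donsker–Varadhan variational inequality on a finite set. -/
lemma sum_mul_sub_log_sum_mul_exp_le {κ : Type*} [Fintype κ] {p q : κ → ℝ} (g : κ → ℝ)
    (hp : ∀ i, 0 ≤ p i) (hq : ∀ i, 0 ≤ q i) (hp1 : ∑ i, p i = 1) (hq1 : ∑ i, q i = 1)
    (hac : ∀ i, q i = 0 → p i = 0) :
    ∑ i, p i * g i - Real.log (∑ i, q i * Real.exp (g i)) ≤ ∑ i, p i * Real.log (p i / q i) := by
  set Z := ∑ i, q i * Real.exp (g i)
  have hZ : 0 < Z := by
    obtain ⟨i, -, hi⟩ := Finset.exists_ne_zero_of_sum_ne_zero (by rw [hq1]; exact one_ne_zero)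
    exact (mul_pos ((hq i).lt_of_ne' hi) (Real.exp_pos _)).trans_le
      (Finset.single_le_sum (fun j _ => mul_nonneg (hq j) (Real.exp_pos _).le) (Finset.mem_univ i))
  -- `a - b ≤ a log (a / b)` at `a = p i`, `b = q i e^{g i} / Z`, summed over `i`.
  have key : ∀ i, p i - q i * Real.exp (g i) / Z ≤
      p i * Real.log (p i / q i) - p i * g i + p i * Real.log Z := by
    intro i
    rcases (hp i).eq_or_lt with h0 | hpi
    · rw [← h0]
      have : 0 ≤ q i * Real.exp (g i) / Z := by have := hq i; positivity
      linarith
    have hqi : 0 < q i := (hq i).lt_of_ne' fun h => hpi.ne' (hac i h)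
    have h := sub_le_mul_log_div (hp i) (div_pos (mul_pos hqi (Real.exp_pos (g i))) hZ)
    rw [div_div_eq_mul_div, Real.log_div (by positivity) (by positivity),
      Real.log_mul hpi.ne' hZ.ne', Real.log_mul hqi.ne' (Real.exp_ne_zero _), Real.log_exp] at h
    rw [Real.log_div hpi.ne' hqi.ne']
    linarith
  have hsum := Finset.sum_le_sum fun i (_ : i ∈ Finset.univ) => key i
  rw [Finset.sum_sub_distrib, ← Finset.sum_div, div_self hZ.ne', hp1, Finset.sum_add_distrib,
    Finset.sum_sub_distrib, ← Finset.sum_mul, hp1, one_mul] at hsum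
  linarith

section FiniteVolume

variable {ι : Type*}

lemma measurableSet_cyl (Λ : Finset ι) (b : ι → Bool) : MeasurableSet (cyl Λ b) := by
  have : cyl Λ b = ⋂ x ∈ Λ, (fun σ : Config ι => σ x) ⁻¹' {b x} := by ext; simp [cyl]
  rw [this]
  exact .biInter Λ.countable_toSet fun x _ => measurable_pi_apply x (.singleton _)

lemma measurable_restrict (Λ : Finset ι) : Measurable (Λ.restrict (π := fun _ : ι => Bool)) :=
  measurable_pi_lambda _ fun _ => measurable_pi_apply _

lemma localOn_indicator_cyl (Λ : Finset ι) (b : ι → Bool) :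
    LocalOn Λ ((cyl Λ b).indicator 1) := fun σ τ h => by
  have : σ ∈ cyl Λ b ↔ τ ∈ cyl Λ b := forall₂_congr fun x hx => by rw [h x hx]
  classical
  exact if_congr this rfl rfl

lemma LocalOn.comp {Λ : Finset ι} {g : Config ι → ℝ} (hg : LocalOn Λ g) (φ : ℝ → ℝ) :
    LocalOn Λ (φ ∘ g) :=
  fun σ τ h => congrArg φ (hg σ τ h)

variable [DecidableEq ι]

-- The configurations over which `relEntVol` sums, written as in its definition.
def extendFalse (Λ : Finset ι) (c : Λ → Bool) : Config ι :=
  fun x => if h : x ∈ Λ then c ⟨x, h⟩ else false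

lemma preimage_restrict_singleton (Λ : Finset ι) (c : Λ → Bool) :
    Λ.restrict (π := fun _ : ι => Bool) ⁻¹' {c} = cyl Λ (extendFalse Λ c) := by
  ext σ
  simp only [Set.mem_preimage, Set.mem_singleton_iff, funext_iff, Finset.restrict_def, cyl,
    Set.mem_ofPred_eq, extendFalse, Subtype.forall]
  exact forall₂_congr fun x hx => by rw [dif_pos hx]

lemma LocalOn.eq_extendFalse_restrict {Λ : Finset ι} {g : Config ι → ℝ} (hg : LocalOn Λ g)
    (σ : Config ι) : g σ = g (extendFalse Λ (Λ.restrict σ)) :=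
  hg _ _ fun x hx => by simp [extendFalse, hx]

lemma LocalOn.integrable {Λ : Finset ι} {g : Config ι → ℝ} (hg : LocalOn Λ g)
    (μ : Measure (Config ι)) [IsFiniteMeasure μ] : Integrable g μ := by
  have h : Integrable (g ∘ extendFalse Λ) (μ.map Λ.restrict) := .of_finite
  exact (h.comp_measurable (measurable_restrict Λ)).congr
    (.of_forall fun σ => (hg.eq_extendFalse_restrict σ).symm)

lemma LocalOn.integral_eq_sum {Λ : Finset ι} {g : Config ι → ℝ} (hg : LocalOn Λ g)
    (μ : Measure (Config ι)) [IsFiniteMeasure μ] :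
    ∫ σ, g σ ∂μ = ∑ c : Λ → Bool, μ.real (cyl Λ (extendFalse Λ c)) * g (extendFalse Λ c) := by
  have hπ := measurable_restrict (ι := ι) Λ
  calc ∫ σ, g σ ∂μ = ∫ σ, g (extendFalse Λ (Λ.restrict σ)) ∂μ :=
        integral_congr_ae (.of_forall hg.eq_extendFalse_restrict)
    _ = ∫ c, g (extendFalse Λ c) ∂(μ.map Λ.restrict) :=
        (integral_map (f := fun c => g (extendFalse Λ c)) hπ.aemeasurable
          (measurable_of_countable _).aestronglyMeasurable).symm
    _ = _ := by
        simp only [integral_fintype Integrable.of_finite, Measure.real,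
          Measure.map_apply hπ (measurableSet_singleton _), preimage_restrict_singleton,
          smul_eq_mul]

lemma sum_measureReal_cyl_extendFalse (Λ : Finset ι) (μ : Measure (Config ι))
    [IsProbabilityMeasure μ] : ∑ c : Λ → Bool, μ.real (cyl Λ (extendFalse Λ c)) = 1 := by
  simpa using ((show LocalOn Λ fun _ => (1 : ℝ) from fun _ _ _ => rfl).integral_eq_sum μ).symm

lemma LocalOn.flipAt_eq {Λ : Finset ι} {g : Config ι → ℝ} (hg : LocalOn Λ g) {x : ι}
    (hx : x ∉ Λ) (σ : Config ι) : g (flipAt σ x) = g σ :=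
  hg _ _ fun _ hy => Function.update_of_ne (ne_of_mem_of_not_mem hy hx) _ _

lemma oscNormSq_le_of_localOn {Λ : Finset ι} {g : Config ι → ℝ} (hg : LocalOn Λ g) {B : ℝ}
    (hB : ∀ σ x, |g (flipAt σ x) - g σ| ≤ B) : oscNormSq g ≤ Λ.card * B ^ 2 := by
  have hzero : ∀ x ∉ Λ, osc g x = 0 := fun x hx => by
    simp [osc, hg.flipAt_eq hx]
  have hsq : ∀ x, osc g x ^ 2 ≤ B ^ 2 := fun x => by
    have hbdd : BddAbove (Set.range fun σ => g (flipAt σ x) - g σ) :=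
      ⟨B, by rintro _ ⟨σ, rfl⟩; exact (abs_le.mp (hB σ x)).2⟩
    refine sq_le_sq' ?_ (ciSup_le fun σ => (abs_le.mp (hB σ x)).2)
    exact (abs_le.mp (hB (fun _ => false) x)).1.trans (le_ciSup hbdd _)
  rw [oscNormSq, tsum_eq_sum fun x hx => by simp [hzero x hx], ← nsmul_eq_mul]
  exact Finset.sum_le_card_nsmul _ _ _ fun x _ => hsq x

end FiniteVolume

lemma exists_cyl_ne_of_ne {ι : Type*} {ν' ν : Measure (Config ι)} [IsProbabilityMeasure ν']
    [IsProbabilityMeasure ν] (hne : ν' ≠ ν) : ∃ (Λ : Finset ι) (b : ι → Bool),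
      ν' (cyl Λ b) ≠ ν (cyl Λ b) := by
  classical
  by_contra! h
  refine hne (ext_of_generate_finite _ generateFrom_measurableCylinders.symm
    isPiSystem_measurableCylinders ?_ (by simp))
  intro s hs
  obtain ⟨Λ, S, hS, rfl⟩ := (mem_measurableCylinders s).mp hs
  have hπ := measurable_restrict (ι := ι) Λ
  have hmap : ν'.map Λ.restrict = ν.map Λ.restrict := Measure.ext_iff_singleton.mpr fun c => by
    rw [Measure.map_apply hπ (measurableSet_singleton _), Measure.map_apply hπ
      (measurableSet_singleton _), preimage_restrict_singleton, h]
  change ν' (Λ.restrict ⁻¹' S) = ν (Λ.restrict ⁻¹' S)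
  rw [← Measure.map_apply hπ hS, ← Measure.map_apply hπ hS, hmap]

section RelativeEntropy

variable {ι : Type*} [DecidableEq ι] {ν' ν : Measure (Config ι)} [IsProbabilityMeasure ν']
  [IsProbabilityMeasure ν] {Λ : Finset ι} {g : Config ι → ℝ}

lemma le_relEntVol_of_localOn (hg : LocalOn Λ g) :
    ENNReal.ofReal (∫ σ, g σ ∂ν' - ∫ σ, g σ ∂ν
      - Real.log (∫ σ, Real.exp (g σ - ∫ τ, g τ ∂ν) ∂ν)) ≤ relEntVol ν' ν Λ := by
  unfold relEntVol
  split_ifs with hac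
  swap
  · exact le_top
  change _ ≤ ENNReal.ofReal (∑ c : Λ → Bool, ν'.real (cyl Λ (extendFalse Λ c)) *
    Real.log (ν'.real (cyl Λ (extendFalse Λ c)) / ν.real (cyl Λ (extendFalse Λ c))))
  refine ENNReal.ofReal_le_ofReal ?_
  set m := ∫ τ, g τ ∂ν
  have hexp : LocalOn Λ fun σ => Real.exp (g σ - m) := hg.comp fun y => Real.exp (y - m)
  have hDV := sum_mul_sub_log_sum_mul_exp_le (fun c => g (extendFalse Λ c) - m)
    (fun _ => measureReal_nonneg) (fun _ => measureReal_nonneg)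
    (sum_measureReal_cyl_extendFalse Λ ν') (sum_measureReal_cyl_extendFalse Λ ν)
    fun c hc => by simp [Measure.real, hac _ ((measureReal_eq_zero_iff).mp hc)]
  simp only [mul_sub, Finset.sum_sub_distrib, ← Finset.sum_mul,
    sum_measureReal_cyl_extendFalse, one_mul] at hDV
  rw [hg.integral_eq_sum, hexp.integral_eq_sum]
  linarith

lemma sq_div_le_relEntVol_of_gcb {C B : ℝ} (hC : 0 < C) (hgcb : GCB ν C) (hg : LocalOn Λ g)
    (hB : ∀ σ x, |g (flipAt σ x) - g σ| ≤ B) :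
    ENNReal.ofReal ((∫ σ, g σ ∂ν' - ∫ σ, g σ ∂ν) ^ 2 / (2 * C * (Λ.card * B ^ 2)))
      ≤ relEntVol ν' ν Λ := by
  set D := ∫ σ, g σ ∂ν' - ∫ σ, g σ ∂ν
  set V := (Λ.card : ℝ) * B ^ 2 with hV_def
  rcases (show 0 ≤ V by positivity).eq_or_lt with hV | hV
  · simp [← hV]
  -- Apply GCB to `t • g` with the optimal `t = D / (C V)`.
  set t := D / (C * V) with ht
  have htg : LocalOn Λ fun σ => t * g σ := hg.comp (t * ·)
  have hosc : oscNormSq (fun σ => t * g σ) ≤ t ^ 2 * V := by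
    refine (oscNormSq_le_of_localOn htg (B := |t| * B) fun σ x => ?_).trans_eq
      (by rw [mul_pow, sq_abs, hV_def]; ring)
    rw [← mul_sub, abs_mul]
    exact mul_le_mul_of_nonneg_left (hB σ x) (abs_nonneg t)
  have hgcb_t := hgcb _ ⟨Λ, htg⟩
  refine le_trans (ENNReal.ofReal_le_ofReal ?_) (le_relEntVol_of_localOn htg)
  simp only [integral_const_mul] at hgcb_t ⊢
  calc D ^ 2 / (2 * C * V) = t * D - C / 2 * (t ^ 2 * V) := by rw [ht]; field_simp; ring
    _ ≤ t * D - C / 2 * oscNormSq (fun σ => t * g σ) := by gcongr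
    _ ≤ _ := by rw [show t * D = t * ∫ σ, g σ ∂ν' - t * ∫ σ, g σ ∂ν by ring]; linarith

end RelativeEntropy

section Lattice

variable {d : ℕ}

lemma mem_cube {k : ℕ} {x : Site d} : x ∈ cube d k ↔ ∀ i, -(k : ℤ) ≤ x i ∧ x i ≤ k := by
  simp [cube, Fintype.mem_piFinset]

lemma card_cube (d k : ℕ) : (cube d k).card = (2 * k + 1) ^ d := by
  have h : (Finset.Icc (-(k : ℤ)) k).card = 2 * k + 1 := by rw [Int.card_Icc]; omega
  simp [cube, Fintype.card_piFinset, h]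

lemma add_mem_cube {m n : ℕ} {x y : Site d} (hx : x ∈ cube d m) (hy : y ∈ cube d n) :
    x + y ∈ cube d (m + n) := mem_cube.2 fun i => by
  have := mem_cube.1 hx i
  have := mem_cube.1 hy i
  simp only [Pi.add_apply]
  omega

lemma card_cube_add_le (m n : ℕ) : (cube d (m + n)).card ≤ (cube d m).card * (cube d n).card := by
  rw [card_cube, card_cube, card_cube, ← mul_pow]
  exact Nat.pow_le_pow_left (by nlinarith) d

lemma exists_subset_cube (Λ : Finset (Site d)) : ∃ m, Λ ⊆ cube d m := by
  refine ⟨Λ.sup fun y => Finset.univ.sup fun i => (y i).natAbs, fun y hy => mem_cube.2 fun i => ?_⟩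
  have h := (Finset.le_sup (f := fun i => (y i).natAbs) (Finset.mem_univ i)).trans
    (Finset.le_sup (f := fun y => Finset.univ.sup fun i => (y i).natAbs) hy)
  exact abs_le.mp ((Int.abs_eq_natAbs _).trans_le (by exact_mod_cast h))

lemma measurable_shift (a : Site d) : Measurable (shift a) :=
  measurable_pi_lambda _ fun _ => measurable_pi_apply _

lemma shift_flipAt (a x : Site d) (σ : Config (Site d)) :
    shift a (flipAt σ x) = flipAt (shift a σ) (x - a) := by
  ext y
  simp only [shift, flipAt, Function.update_apply, eq_sub_iff_add_eq, sub_add_cancel]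

variable {μ : Measure (Config (Site d))} {f : Config (Site d) → ℝ}

lemma TransInv.integral_comp_shift (hμ : TransInv μ) (hf : AEStronglyMeasurable f μ)
    (a : Site d) : ∫ σ, f (shift a σ) ∂μ = ∫ σ, f σ ∂μ := by
  rw [← integral_map (measurable_shift a).aemeasurable (by rwa [hμ a]), hμ a]

lemma TransInv.integrable_comp_shift (hμ : TransInv μ) (hf : Integrable f μ) (a : Site d) :
    Integrable (fun σ => f (shift a σ)) μ := by
  rw [← hμ a] at hf
  exact hf.comp_measurable (measurable_shift a)

noncomputable def shiftSum (f : Config (Site d) → ℝ) (n : ℕ) (σ : Config (Site d)) : ℝ :=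
  ∑ a ∈ cube d n, f (shift a σ)

variable {Λ : Finset (Site d)}

lemma LocalOn.shiftSum {m : ℕ} (hf : LocalOn Λ f) (hΛ : Λ ⊆ cube d m) (n : ℕ) :
    LocalOn (cube d (m + n)) (shiftSum f n) := fun _ _ h =>
  Finset.sum_congr rfl fun _ ha => hf _ _ fun _ hy => h _ (add_mem_cube (hΛ hy) ha)

lemma TransInv.integral_shiftSum [IsFiniteMeasure μ] (hμ : TransInv μ) (hf : LocalOn Λ f)
    (n : ℕ) : ∫ σ, shiftSum f n σ ∂μ = (cube d n).card * ∫ σ, f σ ∂μ := by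
  have hfi := hf.integrable μ
  simp only [shiftSum, integral_finsetSum _ fun a _ => hμ.integrable_comp_shift hfi a,
    hμ.integral_comp_shift hfi.aestronglyMeasurable, Finset.sum_const, nsmul_eq_mul]

lemma abs_shiftSum_flipAt_sub_le (hf : LocalOn Λ f) {M : ℝ} (hM : ∀ σ τ, |f σ - f τ| ≤ M)
    (n : ℕ) (σ : Config (Site d)) (x : Site d) :
    |shiftSum f n (flipAt σ x) - shiftSum f n σ| ≤ Λ.card * M := by
  have hM0 : 0 ≤ M := (abs_nonneg _).trans (hM σ σ)
  -- Only the translates `a` with `x - a ∈ Λ` see the flip at `x`.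
  have hsupp : ∀ a ∈ cube d n, f (shift a (flipAt σ x)) - f (shift a σ) ≠ 0 → x - a ∈ Λ :=
    fun a _ h => by_contra fun hx => h (by rw [shift_flipAt, hf.flipAt_eq hx, sub_self])
  have hcard : ({a ∈ cube d n | x - a ∈ Λ} : Finset (Site d)).card ≤ Λ.card :=
    Finset.card_le_card_of_injOn (x - ·) (fun a ha => (Finset.mem_filter.1 ha).2)
      fun a _ b _ h => sub_right_injective h
  calc |shiftSum f n (flipAt σ x) - shiftSum f n σ|
      = |∑ a ∈ cube d n with x - a ∈ Λ, (f (shift a (flipAt σ x)) - f (shift a σ))| := by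
        rw [Finset.sum_filter_of_ne hsupp, shiftSum, shiftSum, Finset.sum_sub_distrib]
    _ ≤ ∑ a ∈ cube d n with x - a ∈ Λ, |f (shift a (flipAt σ x)) - f (shift a σ)| :=
        Finset.abs_sum_le_sum_abs _ _
    _ ≤ ({a ∈ cube d n | x - a ∈ Λ} : Finset (Site d)).card • M :=
        Finset.sum_le_card_nsmul _ _ _ fun _ _ => hM _ _
    _ ≤ Λ.card * M := by
        rw [nsmul_eq_mul]
        exact mul_le_mul_of_nonneg_right (by exact_mod_cast hcard) hM0

end Lattice

lemma sq_div_le_relEntVol_cube_div_card {d m : ℕ} {ν' ν : Measure (Config (Site d))}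
    [IsProbabilityMeasure ν'] [IsProbabilityMeasure ν] (hTI : TransInv ν) (hTI' : TransInv ν')
    {C : ℝ} (hC : 0 < C) (hgcb : GCB ν C) {Λ : Finset (Site d)} {f : Config (Site d) → ℝ}
    (hf : LocalOn Λ f) (hΛ : Λ ⊆ cube d m) {M : ℝ} (hM : ∀ σ τ, |f σ - f τ| ≤ M) (n : ℕ) :
    ENNReal.ofReal
        ((∫ σ, f σ ∂ν' - ∫ σ, f σ ∂ν) ^ 2 / (2 * C * (Λ.card * M * (cube d m).card) ^ 2))
      ≤ relEntVol ν' ν (cube d (m + n)) / (cube d (m + n)).card := by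
  have h := sq_div_le_relEntVol_of_gcb (ν' := ν') hC hgcb (hf.shiftSum hΛ n)
    (abs_shiftSum_flipAt_sub_le hf hM n)
  rw [hTI'.integral_shiftSum hf, hTI.integral_shiftSum hf, ← mul_sub] at h
  have hW : 0 < (cube d (m + n)).card := by rw [card_cube]; positivity
  rw [ENNReal.le_div_iff_mul_le (.inl (Nat.cast_ne_zero.2 hW.ne'))
    (.inl (ENNReal.natCast_ne_top _)), ← ENNReal.ofReal_natCast,
    ← ENNReal.ofReal_mul (by positivity)]
  refine le_trans (ENNReal.ofReal_le_ofReal ?_) h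
  set D := ∫ σ, f σ ∂ν' - ∫ σ, f σ ∂ν
  set L := (Λ.card : ℝ) * M
  have hK : (0 : ℝ) < (cube d m).card := by rw [card_cube]; positivity
  have hWKV : ((cube d (m + n)).card : ℝ) ≤ (cube d m).card * (cube d n).card := by
    exact_mod_cast card_cube_add_le m n
  have hW' : (0 : ℝ) < (cube d (m + n)).card := by exact_mod_cast hW
  have hratio : ((cube d (m + n)).card : ℝ) / (cube d m).card ^ 2
      ≤ (cube d n).card ^ 2 / (cube d (m + n)).card := by
    rw [div_le_div_iff₀ (by positivity) hW']
    nlinarith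
  calc D ^ 2 / (2 * C * (L * (cube d m).card) ^ 2) * (cube d (m + n)).card
      = D ^ 2 / (2 * C * L ^ 2) * ((cube d (m + n)).card / (cube d m).card ^ 2) := by ring
    _ ≤ D ^ 2 / (2 * C * L ^ 2) * ((cube d n).card ^ 2 / (cube d (m + n)).card) :=
        mul_le_mul_of_nonneg_left hratio (by positivity)
    _ = _ := by ring

theorem distinct_stationary_positive_entropy_general {d : ℕ}
    (ν ν' : Measure (Config (Site d))) [IsProbabilityMeasure ν]
    [IsProbabilityMeasure ν'] (hTI : TransInv ν) (hTI' : TransInv ν')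
    (C : ℝ) (hC : 0 < C) (hgcb : GCB ν C) (hne : ν' ≠ ν) :
    0 < sStar ν' ν := by
  obtain ⟨Λ, b, hb⟩ := exists_cyl_ne_of_ne hne
  obtain ⟨m, hΛ⟩ := exists_subset_cube Λ
  have hΛne : Λ.Nonempty := Finset.nonempty_iff_ne_empty.2 fun h => hb (by simp [h, cyl])
  set f : Config (Site d) → ℝ := (cyl Λ b).indicator 1
  have hf1 : ∀ σ τ, |f σ - f τ| ≤ 1 := fun σ τ => by
    unfold f Set.indicator
    split_ifs <;> norm_num
  have hD : ∫ σ, f σ ∂ν' - ∫ σ, f σ ∂ν ≠ 0 := by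
    rw [integral_indicator_one (measurableSet_cyl Λ b),
      integral_indicator_one (measurableSet_cyl Λ b), sub_ne_zero]
    exact fun h => hb
      ((ENNReal.toReal_eq_toReal_iff' (measure_ne_top _ _) (measure_ne_top _ _)).1 h)
  have hpos : 0 < (∫ σ, f σ ∂ν' - ∫ σ, f σ ∂ν) ^ 2
      / (2 * C * (Λ.card * 1 * (cube d m).card) ^ 2) :=
    div_pos (pow_two_pos_of_ne_zero hD) (by simp [card_cube]; positivity)
  refine (ENNReal.ofReal_pos.2 hpos).trans_le (le_liminf_of_le (by isBoundedDefault) ?_)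
  filter_upwards [eventually_ge_atTop m] with N hN
  obtain ⟨n, rfl⟩ := Nat.exists_eq_add_of_le hN
  exact sq_div_le_relEntVol_cube_div_card hTI hTI' hC hgcb (localOn_indicator_cyl Λ b) hΛ hf1 n

/-- if `ν, ν'` are translation-invariant stationary measures of a
PCA, `ν` satisfies `GCB(C)` and `ν' ≠ ν`, then `s_*(ν'|ν) > 0` (so `ν` and `ν'`
cannot be Gibbs measures for the same translation-invariant potential, since the
latter would force `s_*(ν'|ν) = 0`). -/
theorem distinct_stationary_positive_entropy {d : ℕ} (P : PCA d)
    (ν ν' : Measure (Config (Site d))) [IsProbabilityMeasure ν]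
    [IsProbabilityMeasure ν'] (hTI : TransInv ν) (hTI' : TransInv ν')
    (hstat : Pmeas P ν = ν) (hstat' : Pmeas P ν' = ν')
    (C : ℝ) (hC : 0 < C) (hgcb : GCB ν C) (hne : ν' ≠ ν) :
    0 < sStar ν' ν :=
  distinct_stationary_positive_entropy_general ν ν' hTI hTI' C hC hgcb hne
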